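/- arXiv:1904.05483 — 3 statements merged into one kernel-verified Lean document; each statement's English description precedes it below -/
import Mathlib

section
/- For the broadcast process on the k-ary tree of depth d with parameter θ satisfying kθ² > 2, P[Σ_{i=1}^{k^d} X^(d)_i ≤ k^d/2 | X^(0) = 1] ≤ 1/(θ²k - 1). -/
open Finset

/-- Outcome space for the broadcast process on the `k`-ary tree of depth `d`:
a root label together with, for each non-root vertex (at level `i+1`, indexed by
`Fin (k ^ (i+1))`), a flip indicator for the edge into it (`true` means the
label is flipped relative to the parent's label). -/
abbrev BOmega (k d : ℕ) := Bool × ∀ i : Fin d, Fin (k ^ ((i : ℕ) + 1)) → Bool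

/-- The ancestor at level `i+1` of the leaf `v` (a vertex at level `d`). -/
def anc (k d : ℕ) (v : Fin (k ^ d)) (i : Fin d) : Fin (k ^ ((i : ℕ) + 1)) :=
  ⟨(v : ℕ) / k ^ (d - ((i : ℕ) + 1)), by
    rcases Nat.eq_zero_or_pos k with hk | hk
    · subst hk
      have hd : 0 < d := i.pos
      exact absurd v.isLt (by simp [Nat.zero_pow hd])
    · have h1 : (i : ℕ) + 1 ≤ d := i.isLt
      refine Nat.div_lt_of_lt_mul ?_
      have h2 : k ^ ((i : ℕ) + 1) * k ^ (d - ((i : ℕ) + 1)) = k ^ d := by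
        rw [← pow_add]; congr 1; omega
      rw [mul_comm, h2]; exact v.isLt⟩

/-- The weight (probability) of an outcome of the broadcast process with
parameter `θ`: the root label is uniform, and each flip indicator is
independently `true` with probability `(1-θ)/2` (so each vertex copies its
parent's label with probability `(1+θ)/2`). -/
noncomputable def bwt (θ : ℝ) {k d : ℕ} (ω : BOmega k d) : ℝ :=
  (1 / 2) * ∏ i : Fin d, ∏ e : Fin (k ^ ((i : ℕ) + 1)),
    (if ω.2 i e then (1 - θ) / 2 else (1 + θ) / 2)

/-- The label `X^(d)_v` of the leaf `v`: the root label, flipped once for every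
flipped edge on the path from the root down to `v`. -/
def leafLabel {k d : ℕ} (ω : BOmega k d) (v : Fin (k ^ d)) : Bool :=
  xor ω.1 (decide ((univ.filter fun i : Fin d => ω.2 i (anc k d v i)).card % 2 = 1))

open Classical in
/-- Probability of an event under the broadcast process with parameter `θ`. -/
noncomputable def bPr (θ : ℝ) (k d : ℕ) (A : BOmega k d → Prop) : ℝ :=
  ∑ ω : BOmega k d, if A ω then bwt θ ω else 0

/-- The number of leaves labeled `1` (i.e. `true`). -/
def leafCount {k d : ℕ} (ω : BOmega k d) : ℕ :=
  (univ.filter fun v : Fin (k ^ d) => leafLabel ω v = true).card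


section

lemma sum_fact (k d : ℕ) (g : ∀ i : Fin d, Fin (k ^ ((i:ℕ)+1)) → Bool → ℝ) :
    ∑ f : (∀ i : Fin d, Fin (k ^ ((i:ℕ)+1)) → Bool), ∏ i, ∏ e, g i e (f i e)
    = ∏ i, ∏ e, (g i e false + g i e true) := by
  rw [← Fintype.prod_sum (κ := fun i : Fin d => Fin (k ^ ((i:ℕ)+1)) → Bool)
      (f := fun (i : Fin d) (h : Fin (k ^ ((i:ℕ)+1)) → Bool) => ∏ e, g i e (h e))]
  congr 1
  funext i
  rw [← Fintype.prod_sum (κ := fun _ : Fin (k ^ ((i:ℕ)+1)) => Bool)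
      (f := fun e (b : Bool) => g i e b)]
  congr 1; funext e
  rw [Fintype.sum_bool, add_comm]

noncomputable def pe (θ : ℝ) : Bool → ℝ
  | true => (1 - θ) / 2
  | false => (1 + θ) / 2

noncomputable def sgn : Bool → ℝ
  | true => -1
  | false => 1

lemma pe_eq (θ : ℝ) (b : Bool) : pe θ b = if b then (1 - θ) / 2 else (1 + θ) / 2 := by
  cases b <;> rfl

noncomputable def wt (θ : ℝ) {k d : ℕ} (f : ∀ i : Fin d, Fin (k ^ ((i:ℕ)+1)) → Bool) : ℝ :=
  ∏ i, ∏ e, pe θ (f i e)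

noncomputable def Y {k d : ℕ} (v : Fin (k^d)) (f : ∀ i : Fin d, Fin (k ^ ((i:ℕ)+1)) → Bool) : ℝ :=
  ∏ i, sgn (f i (anc k d v i))

lemma prod_single {n : ℕ} (θ : ℝ) (a : Fin n) :
    ∏ e : Fin n, (pe θ false * (if e = a then sgn false else 1)
      + pe θ true * (if e = a then sgn true else 1)) = θ := by
  have h : ∀ e : Fin n, (pe θ false * (if e = a then sgn false else 1)
      + pe θ true * (if e = a then sgn true else 1)) = if e = a then θ else 1 := by
    intro e; simp only [pe, sgn]; split_ifs <;> ring
  rw [Finset.prod_congr rfl fun e _ => h e,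
    Finset.prod_ite_eq' univ a (fun _ => θ)]
  simp

lemma prod_pair {n : ℕ} (θ : ℝ) (a b : Fin n) :
    ∏ e : Fin n, (pe θ false * ((if e = a then sgn false else 1) * (if e = b then sgn false else 1))
      + pe θ true * ((if e = a then sgn true else 1) * (if e = b then sgn true else 1)))
    = if a = b then 1 else θ ^ 2 := by
  have h : ∀ e : Fin n, (pe θ false * ((if e = a then sgn false else 1) * (if e = b then sgn false else 1))
      + pe θ true * ((if e = a then sgn true else 1) * (if e = b then sgn true else 1)))
      = (if e = a then (if a = b then (1:ℝ) else θ) else 1)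
        * (if e = b then (if a = b then (1:ℝ) else θ) else 1) := by
    intro e; simp only [pe, sgn]
    split_ifs <;> simp_all <;> ring
  rw [Finset.prod_congr rfl fun e _ => h e, Finset.prod_mul_distrib,
    Finset.prod_ite_eq' univ a (fun _ => if a = b then (1:ℝ) else θ),
    Finset.prod_ite_eq' univ b (fun _ => if a = b then (1:ℝ) else θ)]
  simp only [Finset.mem_univ, if_true]
  split_ifs <;> ring

variable {θ : ℝ} {k d : ℕ}

lemma wt_nonneg (h1 : 0 ≤ θ) (h2 : θ ≤ 1) (f : ∀ i : Fin d, Fin (k ^ ((i:ℕ)+1)) → Bool) :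
    0 ≤ wt θ f := by
  refine Finset.prod_nonneg fun i _ => Finset.prod_nonneg fun e _ => ?_
  cases (f i e) <;> simp [pe] <;> linarith

lemma wt_sum : ∑ f : (∀ i : Fin d, Fin (k ^ ((i:ℕ)+1)) → Bool), wt θ f = 1 := by
  unfold wt
  rw [sum_fact]
  refine Finset.prod_eq_one fun i _ => Finset.prod_eq_one fun e _ => ?_
  simp only [pe]; ring

lemma Y_eq (v : Fin (k^d)) (f : ∀ i : Fin d, Fin (k ^ ((i:ℕ)+1)) → Bool) :
    Y v f = ∏ i, ∏ e, (if e = anc k d v i then sgn (f i e) else 1) := by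
  unfold Y
  refine Finset.prod_congr rfl fun i _ => ?_
  rw [Finset.prod_ite_eq' univ (anc k d v i) (fun e => sgn (f i e))]
  simp

lemma E1 (v : Fin (k^d)) :
    ∑ f : (∀ i : Fin d, Fin (k ^ ((i:ℕ)+1)) → Bool), wt θ f * Y v f = θ ^ d := by
  have h1 : ∀ f : (∀ i : Fin d, Fin (k ^ ((i:ℕ)+1)) → Bool), wt θ f * Y v f
      = ∏ i, ∏ e, (pe θ (f i e) * (if e = anc k d v i then sgn (f i e) else 1)) := by
    intro f
    rw [Y_eq, wt, ← Finset.prod_mul_distrib]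
    exact Finset.prod_congr rfl fun i _ => (Finset.prod_mul_distrib).symm
  calc ∑ f : (∀ i : Fin d, Fin (k ^ ((i:ℕ)+1)) → Bool), wt θ f * Y v f
      = ∑ f : (∀ i : Fin d, Fin (k ^ ((i:ℕ)+1)) → Bool),
          ∏ i, ∏ e, (pe θ (f i e) * (if e = anc k d v i then sgn (f i e) else 1)) :=
        Finset.sum_congr rfl fun f _ => h1 f
    _ = ∏ i : Fin d, ∏ e, (pe θ false * (if e = anc k d v i then sgn false else 1)
          + pe θ true * (if e = anc k d v i then sgn true else 1)) :=
        sum_fact k d (fun i e b => pe θ b * (if e = anc k d v i then sgn b else 1))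
    _ = ∏ i : Fin d, θ :=
        Finset.prod_congr rfl fun i _ => prod_single θ (anc k d v i)
    _ = θ ^ d := by simp

lemma E2 (u v : Fin (k^d)) :
    ∑ f : (∀ i : Fin d, Fin (k ^ ((i:ℕ)+1)) → Bool), wt θ f * (Y u f * Y v f)
    = ∏ i : Fin d, (if anc k d u i = anc k d v i then 1 else θ ^ 2) := by
  have h1 : ∀ f : (∀ i : Fin d, Fin (k ^ ((i:ℕ)+1)) → Bool), wt θ f * (Y u f * Y v f)
      = ∏ i, ∏ e, (pe θ (f i e) * ((if e = anc k d u i then sgn (f i e) else 1)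
          * (if e = anc k d v i then sgn (f i e) else 1))) := by
    intro f
    rw [Y_eq, Y_eq, wt, ← Finset.prod_mul_distrib, ← Finset.prod_mul_distrib]
    refine Finset.prod_congr rfl fun i _ => ?_
    rw [← Finset.prod_mul_distrib, ← Finset.prod_mul_distrib]
  calc ∑ f : (∀ i : Fin d, Fin (k ^ ((i:ℕ)+1)) → Bool), wt θ f * (Y u f * Y v f)
      = ∑ f : (∀ i : Fin d, Fin (k ^ ((i:ℕ)+1)) → Bool),
          ∏ i, ∏ e, (pe θ (f i e) * ((if e = anc k d u i then sgn (f i e) else 1)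
            * (if e = anc k d v i then sgn (f i e) else 1))) :=
        Finset.sum_congr rfl fun f _ => h1 f
    _ = ∏ i : Fin d, ∏ e, (pe θ false * ((if e = anc k d u i then sgn false else 1)
            * (if e = anc k d v i then sgn false else 1))
          + pe θ true * ((if e = anc k d u i then sgn true else 1)
            * (if e = anc k d v i then sgn true else 1))) :=
        sum_fact k d (fun i e b => pe θ b * ((if e = anc k d u i then sgn b else 1)
          * (if e = anc k d v i then sgn b else 1)))
    _ = ∏ i : Fin d, (if anc k d u i = anc k d v i then 1 else θ ^ 2) :=
        Finset.prod_congr rfl fun i _ => prod_pair θ (anc k d u i) (anc k d v i)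


def cdiff (k d : ℕ) (u v : Fin (k^d)) : ℕ :=
  ((univ : Finset (Fin d)).filter fun i : Fin d =>
    ¬ ((u:ℕ) / k ^ (d - ((i:ℕ)+1)) = (v:ℕ) / k ^ (d - ((i:ℕ)+1)))).card

lemma cdiff_le (u v : Fin (k^d)) : cdiff k d u v ≤ d := by
  classical
  calc cdiff k d u v ≤ (univ : Finset (Fin d)).card := Finset.card_filter_le _ _
  _ = d := by simp

lemma agree_mono (u v : Fin (k^d)) {a b : ℕ} (hab : b ≤ a)
    (h : (u:ℕ) / k ^ b = (v:ℕ) / k ^ b) : (u:ℕ) / k ^ a = (v:ℕ) / k ^ a := by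
  have h1 : k ^ a = k ^ b * k ^ (a - b) := by rw [← pow_add]; congr 1; omega
  rw [h1, ← Nat.div_div_eq_div_mul, ← Nat.div_div_eq_div_mul, h]

lemma cdiff_le_imp (u v : Fin (k^d)) (m : ℕ) (hm : m < d)
    (h : cdiff k d u v ≤ m) : (u:ℕ) / k ^ m = (v:ℕ) / k ^ m := by
  classical
  by_contra hne
  have hsub : ∀ j : Fin d, d - m - 1 ≤ (j:ℕ) →
      ¬ ((u:ℕ) / k ^ (d - ((j:ℕ)+1)) = (v:ℕ) / k ^ (d - ((j:ℕ)+1))) := by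
    intro j hj h'
    exact hne (agree_mono u v (by omega) h')
  have hinj : (m+1 : ℕ) ≤ cdiff k d u v := by
    have := Finset.card_le_card_of_injOn
      (f := fun t : Fin (m+1) => (⟨d - m - 1 + (t:ℕ), by have := t.isLt; omega⟩ : Fin d))
      (s := (univ : Finset (Fin (m+1))))
      (t := (univ : Finset (Fin d)).filter fun i : Fin d =>
        ¬ ((u:ℕ) / k ^ (d - ((i:ℕ)+1)) = (v:ℕ) / k ^ (d - ((i:ℕ)+1))))
      (fun t _ => by
        simp only [Finset.coe_filter, Set.mem_setOf_eq, Finset.mem_filter, Finset.mem_univ, true_and]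
        exact hsub ⟨d - m - 1 + (t:ℕ), by have := t.isLt; omega⟩ (Nat.le_add_right _ _))
      (fun t1 _ t2 _ he => by
        have h2 : d - m - 1 + (t1:ℕ) = d - m - 1 + (t2:ℕ) := by
          simpa using congrArg Fin.val he
        exact Fin.ext (by omega))
    simpa [cdiff] using this
  omega

lemma count_le (hk : 0 < k) (u : Fin (k^d)) (m : ℕ) (hm : m < d) :
    (((univ : Finset (Fin (k^d))).filter fun v => cdiff k d u v ≤ m).card : ℕ) ≤ k ^ m := by
  classical
  have hkm : 0 < k ^ m := pow_pos hk m
  have := Finset.card_le_card_of_injOn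
    (f := fun v : Fin (k^d) => (⟨(v:ℕ) % k ^ m, Nat.mod_lt _ hkm⟩ : Fin (k^m)))
    (s := (univ : Finset (Fin (k^d))).filter fun v => cdiff k d u v ≤ m)
    (t := (univ : Finset (Fin (k^m))))
    (fun v _ => Finset.mem_univ _)
    (fun v1 h1 v2 h2 he => by
      simp only [Finset.coe_filter, Set.mem_setOf_eq, Finset.mem_univ, true_and] at h1 h2
      have e1 : (v1:ℕ) / k ^ m = (u:ℕ) / k ^ m := cdiff_le_imp v1 u m hm (by
        have : cdiff k d v1 u = cdiff k d u v1 := by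
          unfold cdiff; congr 1; ext i; simp [eq_comm]
        omega)
      have e2 : (v2:ℕ) / k ^ m = (u:ℕ) / k ^ m := cdiff_le_imp v2 u m hm (by
        have : cdiff k d v2 u = cdiff k d u v2 := by
          unfold cdiff; congr 1; ext i; simp [eq_comm]
        omega)
      have e3 : (v1:ℕ) % k ^ m = (v2:ℕ) % k ^ m := by simpa using congrArg Fin.val he
      refine Fin.ext ?_
      rw [← Nat.div_add_mod (v1:ℕ) (k ^ m), ← Nat.div_add_mod (v2:ℕ) (k ^ m), e1, e2, e3])
  calc _ ≤ (univ : Finset (Fin (k^m))).card := this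
  _ = k ^ m := by simp

lemma sgn_eq (b : Bool) : sgn b = if b then (-1:ℝ) else 1 := by cases b <;> rfl

lemma Y_label (f : ∀ i : Fin d, Fin (k ^ ((i:ℕ)+1)) → Bool) (v : Fin (k^d)) :
    Y v f = if leafLabel ((true, f) : BOmega k d) v = true then 1 else -1 := by
  classical
  have h1 : Y v f = (-1:ℝ) ^ ((univ.filter fun i : Fin d => f i (anc k d v i)).card) := by
    unfold Y
    rw [Finset.prod_congr rfl fun i _ => sgn_eq (f i (anc k d v i)),
      ← Finset.prod_filter (fun i : Fin d => f i (anc k d v i)) (fun _ => (-1:ℝ)),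
      Finset.prod_const]
  rw [h1]
  set n := (univ.filter fun i : Fin d => f i (anc k d v i)).card with hn
  have hL : leafLabel ((true, f) : BOmega k d) v = !(decide (n % 2 = 1)) := by
    simp [leafLabel, Bool.xor_comm, hn]
  rcases Nat.even_or_odd n with h | h
  · rw [Even.neg_one_pow h]
    have h2 : ¬ (n % 2 = 1) := by rw [Nat.even_iff] at h; omega
    simp [hL, h2]
  · rw [Odd.neg_one_pow h]
    have h2 : n % 2 = 1 := Nat.odd_iff.mp h
    simp [hL, h2]

lemma S_eq (f : ∀ i : Fin d, Fin (k ^ ((i:ℕ)+1)) → Bool) :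
    (∑ v : Fin (k^d), Y v f)
    = 2 * (leafCount ((true, f) : BOmega k d) : ℝ) - ((k:ℝ) ^ d) := by
  classical
  have h0 : ∀ v : Fin (k^d), Y v f
      = if leafLabel ((true, f) : BOmega k d) v = true then (1:ℝ) else -1 :=
    Y_label f
  rw [Finset.sum_congr rfl fun v _ => h0 v, Finset.sum_ite]
  simp only [Finset.sum_const, nsmul_eq_mul, mul_one, mul_neg]
  have hcard := Finset.card_filter_add_card_filter_not
    (s := (univ : Finset (Fin (k^d))))
    (p := fun v => leafLabel ((true, f) : BOmega k d) v = true)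
  rw [Finset.card_univ, Fintype.card_fin] at hcard
  have hle : leafCount ((true, f) : BOmega k d) ≤ k ^ d := by
    unfold leafCount
    calc _ ≤ (univ : Finset (Fin (k^d))).card := Finset.card_filter_le _ _
    _ = k ^ d := by simp
  have h2 : ((univ.filter fun v : Fin (k^d) =>
      ¬ leafLabel ((true, f) : BOmega k d) v = true).card : ℝ)
      = (k:ℝ)^d - (leafCount ((true, f) : BOmega k d) : ℝ) := by
    have : (univ.filter fun v : Fin (k^d) =>
        ¬ leafLabel ((true, f) : BOmega k d) v = true).card
        = k ^ d - leafCount ((true, f) : BOmega k d) := by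
      unfold leafCount; omega
    rw [this, Nat.cast_sub hle]
    push_cast
    ring
  have h3 : ((univ.filter fun v : Fin (k^d) =>
      leafLabel ((true, f) : BOmega k d) v = true).card : ℝ)
      = (leafCount ((true, f) : BOmega k d) : ℝ) := by rfl
  rw [h3, h2]
  ring

lemma telescope (x : ℝ) (c : ℕ) (hc : c ≤ d) :
    x ^ c = x ^ d + ∑ m ∈ Finset.range d, (if c ≤ m then x ^ m - x ^ (m+1) else 0) := by
  classical
  have h1 : ∑ m ∈ Finset.range d, (if c ≤ m then x ^ m - x ^ (m+1) else 0)
      = ∑ m ∈ Finset.Ico c d, (x ^ m - x ^ (m+1)) := by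
    rw [← Finset.sum_filter]
    congr 1
    ext a
    simp only [Finset.mem_filter, Finset.mem_range, Finset.mem_Ico]
    omega
  have h2 : ∑ m ∈ Finset.Ico c d, (x ^ m - x ^ (m+1)) = x ^ c - x ^ d := by
    rw [Finset.sum_Ico_eq_sub _ hc, Finset.sum_range_sub' (fun i => x ^ i),
      Finset.sum_range_sub' (fun i => x ^ i)]
    ring
  rw [h1, h2]; ring

lemma cdiff_eq_prod (θ : ℝ) (u v : Fin (k^d)) :
    (∏ i : Fin d, (if anc k d u i = anc k d v i then 1 else θ ^ 2))
    = (θ ^ 2) ^ (cdiff k d u v) := by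
  classical
  have h1 : ∀ i : Fin d, (if anc k d u i = anc k d v i then (1:ℝ) else θ ^ 2)
      = if ¬ ((u:ℕ) / k ^ (d - ((i:ℕ)+1)) = (v:ℕ) / k ^ (d - ((i:ℕ)+1))) then θ ^ 2 else 1 := by
    intro i
    have : (anc k d u i = anc k d v i)
        ↔ ((u:ℕ) / k ^ (d - ((i:ℕ)+1)) = (v:ℕ) / k ^ (d - ((i:ℕ)+1))) := by
      constructor
      · intro h; exact congrArg Fin.val h
      · intro h; exact Fin.ext h
    by_cases h : anc k d u i = anc k d v i
    · rw [if_pos h, if_neg (by rw [not_not]; exact this.mp h)]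
    · rw [if_neg h, if_pos (fun hc => h (this.mpr hc))]
  rw [Finset.prod_congr rfl fun i _ => h1 i,
    ← Finset.prod_filter (fun i : Fin d =>
      ¬ ((u:ℕ) / k ^ (d - ((i:ℕ)+1)) = (v:ℕ) / k ^ (d - ((i:ℕ)+1)))) (fun _ => θ ^ 2),
    Finset.prod_const]
  rfl

/-- For the broadcast process on the `k`-ary tree of depth `d`
with parameter `θ` satisfying `kθ² > 2`,
`P[Σ_{i=1}^{k^d} X^(d)_i ≤ k^d/2 | X^(0) = 1] ≤ 1/(θ²k - 1)`. -/
theorem chebyshev_majority_bound (θ : ℝ) (hθ₁ : 0 ≤ θ) (hθ₂ : θ ≤ 1)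
    (k d : ℕ) (hkθ : 2 < (k : ℝ) * θ ^ 2) :
    bPr θ k d (fun ω => (leafCount ω : ℝ) ≤ (k : ℝ) ^ d / 2 ∧ ω.1 = true) /
        bPr θ k d (fun ω => ω.1 = true)
      ≤ 1 / (θ ^ 2 * k - 1) := by
  classical
  -- basic positivity facts
  have hθ0 : 0 < θ := by
    rcases lt_or_eq_of_le hθ₁ with h | h
    · exact h
    · exfalso; rw [← h] at hkθ; norm_num at hkθ
  have hk0 : 0 < k := by
    by_contra h
    have : k = 0 := by omega
    rw [this] at hkθ; norm_num at hkθ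
  have hK : (0:ℝ) < (k:ℝ) := by exact_mod_cast hk0
  set x : ℝ := θ ^ 2 with hx
  have hx0 : 0 < x := by positivity
  have hx1 : x ≤ 1 := by nlinarith
  set r : ℝ := (k:ℝ) * x with hr
  have hr1 : 1 < r := by rw [hr]; linarith
  have hr0 : 0 < r - 1 := by linarith
  set μ : ℝ := (k:ℝ) ^ d * θ ^ d with hμ
  have hμ0 : 0 < μ := by positivity
  -- the event on flips
  set P : ℝ := ∑ f : (∀ i : Fin d, Fin (k ^ ((i:ℕ)+1)) → Bool),
    (if (leafCount ((true, f) : BOmega k d) : ℝ) ≤ (k:ℝ) ^ d / 2 then wt θ f else 0) with hP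
  -- reduce bPr quotient to P
  have hden : bPr θ k d (fun ω => ω.1 = true) = 1 / 2 := by
    unfold bPr
    rw [Fintype.sum_prod_type, Fintype.sum_bool]
    have h1 : ∀ f : (∀ i : Fin d, Fin (k ^ ((i:ℕ)+1)) → Bool),
        bwt θ ((true, f) : BOmega k d) = (1/2) * wt θ f := by
      intro f
      unfold bwt wt
      congr 1
      exact Finset.prod_congr rfl fun i _ => Finset.prod_congr rfl fun e _ => (pe_eq θ _).symm
    refine Eq.trans (congrArg₂ HAdd.hAdd
      (Finset.sum_congr rfl fun f _ => (if_pos rfl).trans (h1 f))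
      (Finset.sum_congr rfl fun f _ => if_neg (by simp))) ?_
    rw [Finset.sum_const_zero, add_zero, ← Finset.mul_sum, wt_sum]
    norm_num
  have hnum : bPr θ k d (fun ω => (leafCount ω : ℝ) ≤ (k : ℝ) ^ d / 2 ∧ ω.1 = true)
      = (1/2) * P := by
    unfold bPr
    rw [Fintype.sum_prod_type, Fintype.sum_bool]
    have h2 : ∑ f : (∀ i : Fin d, Fin (k ^ ((i:ℕ)+1)) → Bool),
        (if ((leafCount ((false, f) : BOmega k d) : ℝ) ≤ (k : ℝ) ^ d / 2
            ∧ ((false, f) : BOmega k d).1 = true)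
          then bwt θ ((false, f) : BOmega k d) else 0) = 0 := by
      refine Finset.sum_eq_zero fun f _ => ?_
      exact if_neg (by simp)
    have h1 : ∀ f : (∀ i : Fin d, Fin (k ^ ((i:ℕ)+1)) → Bool),
        bwt θ ((true, f) : BOmega k d) = (1/2) * wt θ f := by
      intro f
      unfold bwt wt
      congr 1
      exact Finset.prod_congr rfl fun i _ => Finset.prod_congr rfl fun e _ => (pe_eq θ _).symm
    refine Eq.trans (congrArg₂ HAdd.hAdd
      (Finset.sum_congr rfl fun f _ => (by
        by_cases hc : (leafCount ((true, f) : BOmega k d) : ℝ) ≤ (k:ℝ) ^ d / 2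
        · rw [if_pos (⟨hc, rfl⟩ : (leafCount ((true, f) : BOmega k d) : ℝ) ≤ (k:ℝ) ^ d / 2
            ∧ ((true, f) : BOmega k d).1 = true), if_pos hc, h1 f]
        · rw [if_neg (fun hy : (leafCount ((true, f) : BOmega k d) : ℝ) ≤ (k:ℝ) ^ d / 2
            ∧ ((true, f) : BOmega k d).1 = true => hc hy.1), if_neg hc, mul_zero] :
        _ = (1/2) * (if (leafCount ((true, f) : BOmega k d) : ℝ) ≤ (k:ℝ) ^ d / 2
            then wt θ f else 0)))
      (Finset.sum_congr rfl fun f _ => if_neg (by simp))) ?_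
    rw [Finset.sum_const_zero, add_zero, ← Finset.mul_sum, hP]
  rw [hnum, hden]
  have hquot : (1/2) * P / (1/2 : ℝ) = P := by ring
  rw [hquot]
  -- Chebyshev
  set S : (∀ i : Fin d, Fin (k ^ ((i:ℕ)+1)) → Bool) → ℝ :=
    fun f => ∑ v : Fin (k^d), Y v f with hS
  have hpoint : ∀ f : (∀ i : Fin d, Fin (k ^ ((i:ℕ)+1)) → Bool),
      (if (leafCount ((true, f) : BOmega k d) : ℝ) ≤ (k:ℝ) ^ d / 2 then wt θ f else 0)
      ≤ wt θ f * (S f - μ) ^ 2 / μ ^ 2 := by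
    intro f
    by_cases hc : (leafCount ((true, f) : BOmega k d) : ℝ) ≤ (k:ℝ) ^ d / 2
    · rw [if_pos hc]
      have hSf : S f ≤ 0 := by
        rw [hS]; dsimp only; rw [S_eq f]; linarith
      have hsq : μ ^ 2 ≤ (S f - μ) ^ 2 := by nlinarith
      have hw := wt_nonneg hθ₁ hθ₂ f
      have hμ2 : (0:ℝ) < μ ^ 2 := by positivity
      calc wt θ f = wt θ f * μ ^ 2 / μ ^ 2 := by field_simp
      _ ≤ wt θ f * (S f - μ) ^ 2 / μ ^ 2 :=
        (div_le_div_iff_of_pos_right hμ2).mpr (mul_le_mul_of_nonneg_left hsq hw)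
    · rw [if_neg hc]
      exact div_nonneg (mul_nonneg (wt_nonneg hθ₁ hθ₂ f) (sq_nonneg _)) (sq_nonneg μ)
  have hPle : P ≤ (∑ f : (∀ i : Fin d, Fin (k ^ ((i:ℕ)+1)) → Bool),
      wt θ f * (S f - μ) ^ 2) / μ ^ 2 := by
    rw [hP, Finset.sum_div]
    exact Finset.sum_le_sum fun f _ => hpoint f
  -- first and second moments
  have hES : ∑ f : (∀ i : Fin d, Fin (k ^ ((i:ℕ)+1)) → Bool), wt θ f * S f = μ := by
    have : ∀ f : (∀ i : Fin d, Fin (k ^ ((i:ℕ)+1)) → Bool),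
        wt θ f * S f = ∑ v : Fin (k^d), wt θ f * Y v f := by
      intro f; rw [hS]; exact Finset.mul_sum _ _ _
    rw [Finset.sum_congr rfl fun f _ => this f, Finset.sum_comm]
    rw [Finset.sum_congr rfl fun v _ => E1 v]
    rw [Finset.sum_const, Finset.card_univ, Fintype.card_fin, nsmul_eq_mul, hμ]
    push_cast
    ring
  have hES2 : ∑ f : (∀ i : Fin d, Fin (k ^ ((i:ℕ)+1)) → Bool), wt θ f * (S f) ^ 2
      = ∑ u : Fin (k^d), ∑ v : Fin (k^d), x ^ (cdiff k d u v) := by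
    have h1 : ∀ f : (∀ i : Fin d, Fin (k ^ ((i:ℕ)+1)) → Bool),
        wt θ f * (S f) ^ 2 = ∑ u : Fin (k^d), ∑ v : Fin (k^d), wt θ f * (Y u f * Y v f) := by
      intro f
      rw [hS]; dsimp only
      rw [sq, Finset.sum_mul_sum]
      rw [Finset.mul_sum]
      exact Finset.sum_congr rfl fun u _ => Finset.mul_sum _ _ _
    rw [Finset.sum_congr rfl fun f _ => h1 f, Finset.sum_comm]
    refine Finset.sum_congr rfl fun u _ => ?_
    rw [Finset.sum_comm]
    refine Finset.sum_congr rfl fun v _ => ?_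
    rw [E2 u v, cdiff_eq_prod θ u v, hx]
  -- variance bound
  have hgeom : ∑ m ∈ Finset.range d, r ^ m ≤ r ^ d / (r - 1) := by
    rw [le_div_iff₀ hr0, geom_sum_mul r d]
    linarith
  -- per-row variance bound
  have hperu : ∀ u : Fin (k^d), ∑ v : Fin (k^d), x ^ (cdiff k d u v)
      ≤ (k:ℝ) ^ d * x ^ d + r ^ d / (r - 1) := by
    intro u
    have h1 : ∀ v : Fin (k^d), x ^ cdiff k d u v
        = x ^ d + ∑ m ∈ Finset.range d, (if cdiff k d u v ≤ m then x ^ m - x ^ (m+1) else 0) :=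
      fun v => telescope x _ (cdiff_le u v)
    rw [Finset.sum_congr rfl fun v _ => h1 v, Finset.sum_add_distrib, Finset.sum_const,
      Finset.card_univ, Fintype.card_fin, nsmul_eq_mul, Finset.sum_comm]
    push_cast
    refine add_le_add_right ?_ _
    calc ∑ m ∈ Finset.range d, ∑ v : Fin (k^d),
          (if cdiff k d u v ≤ m then x ^ m - x ^ (m+1) else 0)
        ≤ ∑ m ∈ Finset.range d, r ^ m := by
          refine Finset.sum_le_sum fun m hm => ?_
          have hmd : m < d := Finset.mem_range.mp hm
          have hnn : (0:ℝ) ≤ x ^ m - x ^ (m+1) := by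
            have : x ^ (m+1) ≤ x ^ m := pow_le_pow_of_le_one (le_of_lt hx0) hx1 (by omega)
            linarith
          rw [← Finset.sum_filter, Finset.sum_const, nsmul_eq_mul]
          have hcard := count_le hk0 u m hmd
          calc (((univ : Finset (Fin (k^d))).filter fun v => cdiff k d u v ≤ m).card : ℝ)
                * (x ^ m - x ^ (m+1))
              ≤ ((k ^ m : ℕ) : ℝ) * (x ^ m - x ^ (m+1)) := by
                refine mul_le_mul_of_nonneg_right ?_ hnn
                exact_mod_cast hcard
          _ ≤ ((k ^ m : ℕ) : ℝ) * x ^ m := by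
                refine mul_le_mul_of_nonneg_left ?_ (by positivity)
                have : (0:ℝ) ≤ x ^ (m+1) := by positivity
                linarith
          _ = r ^ m := by push_cast; rw [hr, mul_pow]
    _ ≤ r ^ d / (r - 1) := hgeom
  -- total variance bound
  have hxd : x ^ d = (θ ^ d) ^ 2 := by
    rw [hx, ← pow_mul, ← pow_mul, mul_comm]
  have hvar : ∑ u : Fin (k^d), ∑ v : Fin (k^d), x ^ (cdiff k d u v)
      ≤ μ ^ 2 + μ ^ 2 / (r - 1) := by
    calc ∑ u : Fin (k^d), ∑ v : Fin (k^d), x ^ (cdiff k d u v)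
        ≤ ∑ _u : Fin (k^d), ((k:ℝ) ^ d * x ^ d + r ^ d / (r - 1)) :=
          Finset.sum_le_sum fun u _ => hperu u
    _ = ((k ^ d : ℕ) : ℝ) * ((k:ℝ) ^ d * x ^ d + r ^ d / (r - 1)) := by
          rw [Finset.sum_const, Finset.card_univ, Fintype.card_fin, nsmul_eq_mul]
    _ = μ ^ 2 + μ ^ 2 / (r - 1) := by
          have hrd : r ^ d = (k:ℝ) ^ d * x ^ d := by rw [hr, mul_pow]
          rw [hrd, hμ, hxd]
          push_cast
          field_simp
  -- expand the square
  have hexp : ∑ f : (∀ i : Fin d, Fin (k ^ ((i:ℕ)+1)) → Bool), wt θ f * (S f - μ) ^ 2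
      = (∑ u : Fin (k^d), ∑ v : Fin (k^d), x ^ (cdiff k d u v)) - μ ^ 2 := by
    have h1 : ∀ f : (∀ i : Fin d, Fin (k ^ ((i:ℕ)+1)) → Bool),
        wt θ f * (S f - μ) ^ 2
        = wt θ f * (S f) ^ 2 - 2 * μ * (wt θ f * S f) + μ ^ 2 * wt θ f := by
      intro f; ring
    rw [Finset.sum_congr rfl fun f _ => h1 f, Finset.sum_add_distrib, Finset.sum_sub_distrib,
      ← Finset.mul_sum, ← Finset.mul_sum, hES, hES2, wt_sum]
    ring
  -- conclusion
  have hPfin : P ≤ 1 / (r - 1) := by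
    have h2 : ∑ f : (∀ i : Fin d, Fin (k ^ ((i:ℕ)+1)) → Bool), wt θ f * (S f - μ) ^ 2
        ≤ μ ^ 2 / (r - 1) := by
      rw [hexp]; linarith
    calc P ≤ (∑ f : (∀ i : Fin d, Fin (k ^ ((i:ℕ)+1)) → Bool),
          wt θ f * (S f - μ) ^ 2) / μ ^ 2 := hPle
    _ ≤ (μ ^ 2 / (r - 1)) / μ ^ 2 :=
        (div_le_div_iff_of_pos_right (by positivity)).mpr h2
    _ = 1 / (r - 1) := by field_simp
  have hrw : θ ^ 2 * (k:ℝ) - 1 = r - 1 := by rw [hr, hx]; ring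
  rw [hrw]
  exact hPfin

end
end

section
/- In the Ising broadcast tree model with θ = 9/10 and k = 6, suppose x is an assignment to the leaves of a depth-d tree such that for at least 4 of the 6 depth-1 subtrees i, the posterior P[X^(1)_i = 1 | leaves of subtree i equal the corresponding part of x] ≥ 0.95. Then P[X^(0) = 1 | X^(d) = x] ≥ 19/20. -/
open Finset

namespace BT

noncomputable def w (θ : ℝ) (b : Bool) : ℝ := if b then (1 - θ) / 2 else (1 + θ) / 2

lemma emb_lt (t : Fin (6^1)) {M : ℕ} (u : Fin M) : (t : ℕ) * M + (u : ℕ) < 6 * M := by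
  have ht : (t : ℕ) < 6 := t.isLt
  have h1 : (t : ℕ) * M + (u : ℕ) < ((t : ℕ) + 1) * M := by
    rw [add_mul, one_mul]; exact Nat.add_lt_add_left u.isLt _
  exact h1.trans_le (Nat.mul_le_mul_right M ht)

lemma pow_succ6 (n : ℕ) : (6:ℕ) ^ (n + 1) = 6 * 6 ^ n := by rw [pow_succ]; ring

/-- index of a sub-vertex inside the full tree -/
def emb {M : ℕ} (t : Fin (6^1)) (u : Fin (6 ^ M)) : Fin (6 ^ (M + 1)) :=
  ⟨(t : ℕ) * 6 ^ M + (u : ℕ), lt_of_lt_of_le (emb_lt t u) (le_of_eq (pow_succ6 M).symm)⟩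

def toSub {e : ℕ} (ω : BOmega 6 (e+1)) (t : Fin (6^1)) : BOmega 6 e :=
  ⟨xor ω.1 (ω.2 ⟨0, e.succ_pos⟩ t),
   fun j v => ω.2 j.succ ⟨(t : ℕ) * 6 ^ ((j : ℕ) + 1) + (v : ℕ), by
     simp only [Fin.val_succ]
     exact lt_of_lt_of_le (emb_lt t v) (le_of_eq (pow_succ6 ((j:ℕ)+1)).symm)⟩⟩

def ofSub {e : ℕ} (r : Bool) (g : Fin (6^1) → BOmega 6 e) : BOmega 6 (e+1) :=
  ⟨r, fun i v =>
    if h : (i : ℕ) = 0 then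
      xor r (g ⟨(v : ℕ), by
        calc (v:ℕ) < 6 ^ ((i:ℕ)+1) := v.isLt
        _ = 6 ^ 1 := by rw [h]⟩).1
    else
      (g ⟨(v : ℕ) / 6 ^ (i : ℕ), by
            have h1 : 0 < (6:ℕ) ^ (i : ℕ) := by positivity
            rw [Nat.div_lt_iff_lt_mul h1]
            calc (v:ℕ) < 6 ^ ((i:ℕ)+1) := v.isLt
            _ = 6 ^ 1 * 6 ^ (i:ℕ) := by rw [← pow_add]; ring_nf⟩).2
        ⟨(i : ℕ) - 1, by have := i.isLt; omega⟩
        ⟨(v : ℕ) % 6 ^ (i : ℕ), by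
            have h2 : (i:ℕ) - 1 + 1 = (i:ℕ) := by omega
            rw [h2]; exact Nat.mod_lt _ (by positivity)⟩⟩

lemma ofSub_fst {e : ℕ} (r : Bool) (g : Fin (6^1) → BOmega 6 e) : (ofSub r g).1 = r := rfl

lemma ofSub_zero {e : ℕ} (r : Bool) (g : Fin (6^1) → BOmega 6 e) (v : Fin (6^1)) :
    (ofSub r g).2 ⟨0, e.succ_pos⟩ v = xor r (g ⟨(v:ℕ), v.isLt⟩).1 := rfl

lemma ofSub_succ {e : ℕ} (r : Bool) (g : Fin (6^1) → BOmega 6 e) (j : Fin e)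
    (v : Fin (6 ^ ((j:ℕ) + 1 + 1))) :
    (ofSub r g).2 j.succ v
      = (g ⟨(v : ℕ) / 6 ^ ((j:ℕ)+1), by
          have h1 : 0 < (6:ℕ) ^ ((j:ℕ)+1) := by positivity
          rw [Nat.div_lt_iff_lt_mul h1]
          calc (v:ℕ) < 6 ^ ((j:ℕ)+1+1) := v.isLt
          _ = 6 ^ 1 * 6 ^ ((j:ℕ)+1) := by rw [← pow_add]; ring_nf⟩).2
        j ⟨(v : ℕ) % 6 ^ ((j:ℕ)+1), Nat.mod_lt _ (by positivity)⟩ := rfl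

lemma toSub_ofSub {e : ℕ} (r : Bool) (g : Fin (6^1) → BOmega 6 e) (t : Fin (6^1)) :
    toSub (ofSub r g) t = g t := by
  have hM : ∀ j : Fin e, 0 < (6:ℕ) ^ ((j:ℕ)+1) := fun j => by positivity
  refine Prod.ext ?_ ?_
  · show xor r ((ofSub r g).2 ⟨0, e.succ_pos⟩ t) = (g t).1
    rw [ofSub_zero]
    have : (⟨(t:ℕ), t.isLt⟩ : Fin (6^1)) = t := rfl
    rw [this]
    cases r <;> simp
  · funext j v
    show (ofSub r g).2 j.succ _ = (g t).2 j v
    rw [ofSub_succ]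
    have hdiv : ((t : ℕ) * 6 ^ ((j : ℕ) + 1) + (v : ℕ)) / 6 ^ ((j:ℕ)+1) = (t : ℕ) := by
      rw [add_comm, Nat.add_mul_div_right _ _ (hM j), Nat.div_eq_of_lt v.isLt, zero_add]
    have hmod : ((t : ℕ) * 6 ^ ((j : ℕ) + 1) + (v : ℕ)) % 6 ^ ((j:ℕ)+1) = (v : ℕ) := by
      rw [add_comm, Nat.add_mul_mod_self_right]
      exact Nat.mod_eq_of_lt v.isLt
    have key : ∀ (a : Fin (6^1)) (_ : a = t) (b : Fin (6^((j:ℕ)+1))) (_ : b = v),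
        (g a).2 j b = (g t).2 j v := by rintro a rfl b rfl; rfl
    exact key _ (Fin.ext hdiv) _ (Fin.ext hmod)

lemma ofSub_toSub {e : ℕ} (ω : BOmega 6 (e+1)) : ofSub ω.1 (toSub ω) = ω := by
  refine Prod.ext rfl ?_
  show (ofSub ω.1 (toSub ω)).2 = ω.2
  funext i v
  by_cases hi : (i : ℕ) = 0
  · have hieq : i = ⟨0, e.succ_pos⟩ := Fin.ext hi
    subst hieq
    rw [ofSub_zero]
    show xor ω.1 (xor ω.1 (ω.2 ⟨0, e.succ_pos⟩ _)) = _
    rw [← Bool.xor_assoc, Bool.xor_self, Bool.false_xor]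
  · obtain ⟨iv, hlt⟩ := i
    simp only at hi
    obtain ⟨jv, rfl⟩ : ∃ jv, iv = jv + 1 := ⟨iv - 1, by omega⟩
    have hj : jv < e := by omega
    show (ofSub ω.1 (toSub ω)).2 (Fin.succ ⟨jv, hj⟩) v = _
    rw [ofSub_succ]
    have key : ∀ (u : Fin (6 ^ (jv+1+1))), (u:ℕ) = (v:ℕ) →
        ω.2 ⟨jv+1, hlt⟩ u = ω.2 ⟨jv+1, hlt⟩ v := by
      intro u hu; have : u = v := Fin.ext hu; rw [this]
    refine key _ ?_
    show (v:ℕ) / 6 ^ (jv+1) * 6 ^ (jv+1) + (v:ℕ) % 6 ^ (jv+1) = (v:ℕ)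
    rw [mul_comm]; exact Nat.div_add_mod _ _

def esplit (M : ℕ) : Fin (6^1) × Fin (6^M) ≃ Fin (6^(M+1)) where
  toFun p := emb p.1 p.2
  invFun v := (⟨(v:ℕ) / 6^M, by
      rw [Nat.div_lt_iff_lt_mul (by positivity : 0 < (6:ℕ)^M)]
      calc (v:ℕ) < 6 ^ (M+1) := v.isLt
      _ = 6^1 * 6^M := by rw [← pow_add]; ring_nf⟩,
    ⟨(v:ℕ) % 6^M, Nat.mod_lt _ (by positivity)⟩)
  left_inv p := by
    obtain ⟨t, u⟩ := p
    have hM : 0 < (6:ℕ)^M := by positivity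
    have hdiv : ((t : ℕ) * 6 ^ M + (u : ℕ)) / 6 ^ M = (t : ℕ) := by
      rw [add_comm, Nat.add_mul_div_right _ _ hM, Nat.div_eq_of_lt u.isLt, zero_add]
    have hmod : ((t : ℕ) * 6 ^ M + (u : ℕ)) % 6 ^ M = (u : ℕ) := by
      rw [add_comm, Nat.add_mul_mod_self_right]
      exact Nat.mod_eq_of_lt u.isLt
    show (⟨_, _⟩, ⟨_, _⟩) = (t, u)
    rw [Prod.mk.injEq]
    constructor
    · exact Fin.ext hdiv
    · exact Fin.ext hmod
  right_inv v := by
    apply Fin.ext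
    show (v:ℕ) / 6^M * 6^M + (v:ℕ) % 6^M = (v:ℕ)
    rw [mul_comm]; exact Nat.div_add_mod _ _

lemma bwt_eq (θ : ℝ) {k d : ℕ} (ω : BOmega k d) :
    bwt θ ω = (1/2) * ∏ i : Fin d, ∏ v : Fin (k ^ ((i : ℕ) + 1)),
      w θ (ω.2 i v) := rfl

lemma bwt_ofSub (θ : ℝ) {e : ℕ} (r : Bool) (g : Fin (6^1) → BOmega 6 e) :
    bwt θ (ofSub r g)
      = (1/2) * ∏ t : Fin (6^1), (2 * w θ (xor r (g t).1) * bwt θ (g t)) := by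
  rw [bwt_eq, Fin.prod_univ_succ]
  have hz : (∏ v : Fin (6 ^ (((0 : Fin (e+1)) : ℕ) + 1)), w θ ((ofSub r g).2 0 v))
      = ∏ t : Fin (6^1), w θ (xor r (g t).1) := by
    exact Fintype.prod_equiv (finCongr rfl) _ _ (fun v => rfl)
  rw [hz]
  have hs : (∏ j : Fin e, ∏ v : Fin (6 ^ ((j.succ : ℕ) + 1)), w θ ((ofSub r g).2 j.succ v))
      = ∏ t : Fin (6^1), ∏ j : Fin e, ∏ u : Fin (6 ^ ((j : ℕ) + 1)), w θ ((g t).2 j u) := by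
    rw [← Finset.prod_comm]
    refine Finset.prod_congr rfl fun j _ => ?_
    simp only [Fin.val_succ]
    rw [← Equiv.prod_comp (esplit ((j:ℕ)+1)) (fun v => w θ ((ofSub r g).2 j.succ v)),
      Fintype.prod_prod_type]
    refine Finset.prod_congr rfl fun t _ => Finset.prod_congr rfl fun u _ => ?_
    have h1 := congrArg (fun z => z.2 j u) (toSub_ofSub r g t)
    exact (congrArg (w θ) h1.symm).symm
  rw [hs]
  simp only [bwt_eq]
  rw [← Finset.prod_mul_distrib]
  exact congrArg _ (Finset.prod_congr rfl fun t _ => by ring)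

def subEquiv (e : ℕ) : BOmega 6 (e+1) ≃ Bool × (Fin (6^1) → BOmega 6 e) where
  toFun ω := (ω.1, toSub ω)
  invFun p := ofSub p.1 p.2
  left_inv ω := ofSub_toSub ω
  right_inv p := Prod.ext rfl (funext fun t => toSub_ofSub p.1 p.2 t)

lemma sum_pi_prod {ι : Type*} [Fintype ι] [DecidableEq ι] {κ : ι → Type*}
    [∀ i, Fintype (κ i)] (F : ∀ i, κ i → ℝ) :
    ∑ f : ∀ i, κ i, ∏ i, F i (f i) = ∏ i, ∑ c : κ i, F i c := by
  rw [Finset.prod_univ_sum, Fintype.piFinset_univ]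

lemma factor (θ : ℝ) (e : ℕ) (ρ : Bool → ℝ) (h : Bool → Fin (6^1) → BOmega 6 e → ℝ) :
    ∑ ω : BOmega 6 (e+1), (bwt θ ω * ρ ω.1 * ∏ t : Fin (6^1), h ω.1 t (toSub ω t))
      = (1/2) * ∑ r : Bool, ρ r *
          ∏ t : Fin (6^1), ∑ σ : BOmega 6 e, 2 * w θ (xor r σ.1) * bwt θ σ * h r t σ := by
  classical
  rw [← Equiv.sum_comp (subEquiv e).symm
    (fun ω => bwt θ ω * ρ ω.1 * ∏ t : Fin (6^1), h ω.1 t (toSub ω t))]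
  have hsymm : ∀ p : Bool × (Fin (6^1) → BOmega 6 e), (subEquiv e).symm p = ofSub p.1 p.2 :=
    fun p => rfl
  rw [Fintype.sum_prod_type]
  rw [Finset.mul_sum]
  refine Finset.sum_congr rfl fun r _ => ?_
  have step : ∀ g : Fin (6^1) → BOmega 6 e,
      bwt θ ((subEquiv e).symm (r, g)) * ρ ((subEquiv e).symm (r, g)).1 *
        ∏ t : Fin (6^1), h ((subEquiv e).symm (r, g)).1 t (toSub ((subEquiv e).symm (r, g)) t)
      = (1/2) * ρ r * ∏ t : Fin (6^1),
          (2 * w θ (xor r (g t).1) * bwt θ (g t) * h r t (g t)) := by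
    intro g
    rw [hsymm]
    show bwt θ (ofSub r g) * ρ r * ∏ t : Fin (6^1), h r t (toSub (ofSub r g) t) = _
    rw [bwt_ofSub]
    rw [Finset.prod_congr rfl (fun t _ => by rw [toSub_ofSub r g t] :
      ∀ t ∈ univ, h r t (toSub (ofSub r g) t) = h r t (g t))]
    have hcomb : (∏ t : Fin (6^1), 2 * w θ (xor r (g t).1) * bwt θ (g t)) *
        ∏ t : Fin (6^1), h r t (g t)
        = ∏ t : Fin (6^1), (2 * w θ (xor r (g t).1) * bwt θ (g t) * h r t (g t)) := by
      rw [← Finset.prod_mul_distrib]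
    rw [← hcomb]
    ring
  rw [Finset.sum_congr rfl (fun g _ => step g)]
  rw [← Finset.mul_sum]
  have := sum_pi_prod (fun t (σ : BOmega 6 e) => 2 * w θ (xor r σ.1) * bwt θ σ * h r t σ)
  rw [this]
  ring

lemma w_sum (θ : ℝ) : ∑ b : Bool, w θ b = 1 := by
  simp [w]; ring

lemma half_mass (θ : ℝ) (m : ℕ) (r : Bool) :
    ∑ f : (∀ i : Fin m, Fin (6 ^ ((i:ℕ)+1)) → Bool), bwt θ ((r, f) : BOmega 6 m) = 1/2 := by
  have h0 : ∀ f : (∀ i : Fin m, Fin (6 ^ ((i:ℕ)+1)) → Bool),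
      bwt θ ((r, f) : BOmega 6 m)
        = (1/2) * ∏ i : Fin m, ∏ v : Fin (6 ^ ((i:ℕ)+1)), w θ (f i v) := fun f => rfl
  rw [Finset.sum_congr rfl fun f _ => h0 f, ← Finset.mul_sum]
  rw [sum_pi_prod (ι := Fin m) (κ := fun i => Fin (6 ^ ((i:ℕ)+1)) → Bool)
    (fun i fi => ∏ v : Fin (6 ^ ((i:ℕ)+1)), w θ (fi v))]
  have h2 : ∀ i : Fin m, ∑ fi : Fin (6 ^ ((i:ℕ)+1)) → Bool,
      ∏ v : Fin (6 ^ ((i:ℕ)+1)), w θ (fi v) = 1 := by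
    intro i
    rw [sum_pi_prod (ι := Fin (6 ^ ((i:ℕ)+1))) (κ := fun _ => Bool) (fun _ c => w θ c)]
    rw [Finset.prod_congr rfl fun v _ => w_sum θ]
    simp
  rw [Finset.prod_congr rfl fun i _ => h2 i]
  simp

lemma mass (θ : ℝ) (m : ℕ) (b : Bool) : bPr θ 6 m (fun σ => σ.1 = b) = 1/2 := by
  classical
  rw [bPr, Fintype.sum_prod_type, Fintype.sum_bool]
  cases b <;> simp [half_mass]

open Classical in
lemma split (θ : ℝ) (m : ℕ) (r : Bool) (P : BOmega 6 m → Prop) :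
    ∑ σ : BOmega 6 m, 2 * w θ (xor r σ.1) * bwt θ σ * (if P σ then 1 else 0)
      = 2 * w θ (xor r true) * bPr θ 6 m (fun σ => σ.1 = true ∧ P σ)
        + 2 * w θ (xor r false) * bPr θ 6 m (fun σ => σ.1 = false ∧ P σ) := by
  rw [bPr, bPr, Finset.mul_sum, Finset.mul_sum, ← Finset.sum_add_distrib]
  refine Finset.sum_congr rfl fun σ _ => ?_
  by_cases h1 : P σ
  · cases hσ : σ.1 <;> simp [h1, hσ] <;> ring
  · simp [h1]

lemma parity_step (a b : Bool) (S : ℕ) :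
    xor a (decide (((if xor a b then 1 else 0) + S) % 2 = 1)) = xor b (decide (S % 2 = 1)) := by
  rcases Nat.mod_two_eq_zero_or_one S with h | h <;>
    cases a <;> cases b <;> simp [Nat.add_mod, h]

lemma leaf_ofSub {e : ℕ} (r : Bool) (g : Fin (6^1) → BOmega 6 e)
    (t : Fin (6^1)) (u : Fin (6^e)) :
    leafLabel (ofSub r g) (emb t u) = leafLabel (g t) u := by
  rw [leafLabel, leafLabel, Finset.card_filter, Finset.card_filter,
    Fin.sum_univ_succ]
  have hzero : (ofSub r g).2 0 (anc 6 (e+1) (emb t u) 0) = xor r (g t).1 := by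
    have h1 : (ofSub r g).2 0 (anc 6 (e+1) (emb t u) 0)
        = xor r (g ⟨((anc 6 (e+1) (emb t u) 0) : ℕ), (anc 6 (e+1) (emb t u) 0).isLt⟩).1 := rfl
    rw [h1]
    have hval : ((anc 6 (e+1) (emb t u) 0) : ℕ) = (t : ℕ) := by
      show ((t : ℕ) * 6 ^ e + (u : ℕ)) / 6 ^ (e + 1 - (0 + 1)) = (t : ℕ)
      simp only [Nat.add_sub_cancel]
      rw [add_comm, Nat.add_mul_div_right _ _ (by positivity : 0 < (6:ℕ)^e),
        Nat.div_eq_of_lt u.isLt, zero_add]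
    have : (⟨((anc 6 (e+1) (emb t u) 0) : ℕ), (anc 6 (e+1) (emb t u) 0).isLt⟩ : Fin (6^1)) = t :=
      Fin.ext hval
    rw [this]
  have hsucc : ∀ j : Fin e, (ofSub r g).2 j.succ (anc 6 (e+1) (emb t u) j.succ)
      = (g t).2 j (anc 6 e u j) := by
    intro j
    rw [ofSub_succ]
    have hc : 0 < (6:ℕ) ^ (e - ((j:ℕ)+1)) := by positivity
    have hm : 0 < (6:ℕ) ^ ((j:ℕ)+1) := by positivity
    have hcm : (6:ℕ) ^ (e - ((j:ℕ)+1)) * 6 ^ ((j:ℕ)+1) = 6 ^ e := by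
      rw [← pow_add]; congr 1; have := j.isLt; omega
    have hA : ((anc 6 (e+1) (emb t u) j.succ) : ℕ)
        = (t : ℕ) * 6 ^ ((j:ℕ)+1) + (u : ℕ) / 6 ^ (e - ((j:ℕ)+1)) := by
      show ((t : ℕ) * 6 ^ e + (u : ℕ)) / 6 ^ (e + 1 - (((j:ℕ)+1) + 1)) = _
      have he : e + 1 - (((j:ℕ)+1) + 1) = e - ((j:ℕ)+1) := by omega
      rw [he]
      have hgen : ∀ un : ℕ, ((t:ℕ) * 6^e + un) / 6^(e-((j:ℕ)+1))
          = (t:ℕ) * 6^((j:ℕ)+1) + un / 6^(e-((j:ℕ)+1)) := by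
        intro un
        rw [← hcm, show (t:ℕ) * (6 ^ (e - ((j:ℕ)+1)) * 6 ^ ((j:ℕ)+1)) + un
            = un + ((t:ℕ) * 6 ^ ((j:ℕ)+1)) * 6 ^ (e - ((j:ℕ)+1)) by ring,
          Nat.add_mul_div_right _ _ hc, add_comm]
      exact hgen (u:ℕ)
    have hudiv : (u : ℕ) / 6 ^ (e - ((j:ℕ)+1)) < 6 ^ ((j:ℕ)+1) := by
      rw [Nat.div_lt_iff_lt_mul hc]
      calc (u:ℕ) < 6 ^ e := u.isLt
      _ = 6 ^ ((j:ℕ)+1) * 6 ^ (e - ((j:ℕ)+1)) := by rw [← pow_add]; congr 1; have := j.isLt; omega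
    have hdiv2 : ((anc 6 (e+1) (emb t u) j.succ) : ℕ) / 6 ^ ((j:ℕ)+1) = (t : ℕ) := by
      rw [hA, add_comm, Nat.add_mul_div_right _ _ hm, Nat.div_eq_of_lt hudiv, zero_add]
    have hmod2 : ((anc 6 (e+1) (emb t u) j.succ) : ℕ) % 6 ^ ((j:ℕ)+1)
        = (u : ℕ) / 6 ^ (e - ((j:ℕ)+1)) := by
      rw [hA, add_comm, Nat.add_mul_mod_self_right, Nat.mod_eq_of_lt hudiv]
    have key : ∀ (a : Fin (6^1)) (_ : a = t) (b : Fin (6^((j:ℕ)+1))) (_ : b = anc 6 e u j),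
        (g a).2 j b = (g t).2 j (anc 6 e u j) := by rintro a rfl b rfl; rfl
    exact key _ (Fin.ext hdiv2) _ (Fin.ext hmod2)
  rw [hzero, Finset.sum_congr rfl fun j _ => by rw [hsucc j]]
  show xor r (decide (((if xor r (g t).1 then 1 else 0) + _) % 2 = 1)) = _
  rw [parity_step r ((g t).1)]

lemma emb_div {M : ℕ} (t : Fin (6^1)) (u : Fin (6^M)) :
    ((emb t u : Fin (6^(M+1))) : ℕ) / 6 ^ M = (t : ℕ) := by
  show ((t : ℕ) * 6^M + (u : ℕ)) / 6^M = (t : ℕ)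
  rw [add_comm, Nat.add_mul_div_right _ _ (by positivity : 0 < (6:ℕ)^M),
    Nat.div_eq_of_lt u.isLt, zero_add]

lemma emb_recover {M : ℕ} (v : Fin (6^(M+1))) :
    emb (⟨(v:ℕ)/6^M, by
        rw [Nat.div_lt_iff_lt_mul (by positivity : 0 < (6:ℕ)^M)]
        calc (v:ℕ) < 6 ^ (M+1) := v.isLt
        _ = 6^1 * 6^M := by rw [← pow_add]; ring_nf⟩ : Fin (6^1))
      ⟨(v:ℕ) % 6^M, Nat.mod_lt _ (by positivity)⟩ = v := by
  apply Fin.ext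
  show (v:ℕ) / 6^M * 6^M + (v:ℕ) % 6^M = (v:ℕ)
  rw [mul_comm]; exact Nat.div_add_mod _ _

lemma leaf_toSub {e : ℕ} (ω : BOmega 6 (e+1)) (t : Fin (6^1)) (u : Fin (6^e)) :
    leafLabel ω (emb t u) = leafLabel (toSub ω t) u := by
  conv_lhs => rw [← ofSub_toSub ω]
  exact leaf_ofSub ω.1 (toSub ω) t u

lemma cond_all {e : ℕ} (ω : BOmega 6 (e+1)) (x : Fin (6^(e+1)) → Bool) :
    (∀ v, leafLabel ω v = x v) ↔
      ∀ t : Fin (6^1), ∀ u : Fin (6^e), leafLabel (toSub ω t) u = x (emb t u) := by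
  constructor
  · intro h t u; rw [← leaf_toSub]; exact h _
  · intro h v
    rw [← emb_recover v, leaf_toSub]
    exact h _ _

lemma cond_sub {e : ℕ} (ω : BOmega 6 (e+1)) (x : Fin (6^(e+1)) → Bool) (i : Fin (6^1)) :
    (∀ v : Fin (6^(e+1)), (v:ℕ) / 6^e = (i:ℕ) → leafLabel ω v = x v) ↔
      ∀ u : Fin (6^e), leafLabel (toSub ω i) u = x (emb i u) := by
  constructor
  · intro h u; rw [← leaf_toSub]; exact h _ (emb_div i u)
  · intro h v hv
    have key : ∀ (a : Fin (6^1)), (a:ℕ) = (i:ℕ) → ∀ (b : Fin (6^e)),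
        leafLabel (toSub ω a) b = x (emb a b) := by
      intro a ha b
      have : a = i := Fin.ext ha
      subst this
      exact h b
    rw [← emb_recover v, leaf_toSub]
    exact key _ hv _

lemma exists_config : ∀ (m : ℕ) (y : Fin (6^m) → Bool),
    ∃ σ : BOmega 6 m, ∀ u, leafLabel σ u = y u := by
  intro m
  induction m with
  | zero =>
    intro y
    refine ⟨(y ⟨0, by norm_num⟩, fun i _ => i.elim0), fun u => ?_⟩
    have hu : u = ⟨0, by norm_num⟩ := Fin.ext (by have := u.isLt; omega)
    subst hu
    simp [leafLabel]
  | succ e ih =>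
    intro y
    choose g hg using fun t : Fin (6^1) => ih (fun u => y (emb t u))
    refine ⟨ofSub true g, fun v => ?_⟩
    rw [← emb_recover v, leaf_ofSub]
    exact hg _ _

lemma bwt_pos {k m : ℕ} (σ : BOmega k m) : 0 < bwt (9/10) σ := by
  rw [bwt]
  apply mul_pos (by norm_num)
  apply Finset.prod_pos
  intro i _
  apply Finset.prod_pos
  intro v _
  by_cases h : σ.2 i v <;> simp [h] <;> norm_num

lemma bPr_nonneg (m : ℕ) (A : BOmega 6 m → Prop) : 0 ≤ bPr (9/10) 6 m A := by
  rw [bPr]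
  apply Finset.sum_nonneg
  intro σ _
  by_cases h : A σ <;> simp [h]
  exact (bwt_pos σ).le

lemma bPr_pos (m : ℕ) (A : BOmega 6 m → Prop) (hA : ∃ σ, A σ) : 0 < bPr (9/10) 6 m A := by
  obtain ⟨σ0, h0⟩ := hA
  rw [bPr]
  apply Finset.sum_pos' (fun σ _ => by by_cases h : A σ <;> simp [h]; exact (bwt_pos σ).le)
  exact ⟨σ0, Finset.mem_univ _, by simp [h0]; exact bwt_pos σ0⟩

lemma bPr_congr (θ : ℝ) (m : ℕ) (A B : BOmega 6 m → Prop) (h : ∀ σ, A σ ↔ B σ) :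
    bPr θ 6 m A = bPr θ 6 m B := by
  classical
  rw [bPr, bPr]
  exact Finset.sum_congr rfl fun σ _ => if_congr (h σ) rfl rfl

lemma bPr_false (θ : ℝ) (m : ℕ) (A : BOmega 6 m → Prop) (h : ∀ σ, ¬ A σ) :
    bPr θ 6 m A = 0 := by
  rw [bPr]
  exact Finset.sum_eq_zero fun σ _ => by simp [h σ]

lemma bPr_le (m : ℕ) (A B : BOmega 6 m → Prop) (h : ∀ σ, A σ → B σ) :
    bPr (9/10) 6 m A ≤ bPr (9/10) 6 m B := by
  rw [bPr, bPr]
  apply Finset.sum_le_sum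
  intro σ _
  by_cases hσ : A σ
  · simp [hσ, h σ hσ]
  · by_cases hb : B σ <;> simp [hσ, hb]
    exact (bwt_pos σ).le

open Classical in
/-- classical indicator -/
noncomputable def ind (p : Prop) : ℝ := if p then 1 else 0

lemma ind_pos {p : Prop} (h : p) : ind p = 1 := by rw [ind, if_pos h]
lemma ind_neg {p : Prop} (h : ¬ p) : ind p = 0 := by rw [ind, if_neg h]

lemma bPr_eq_sum_ind (θ : ℝ) (m : ℕ) (A : BOmega 6 m → Prop) :
    bPr θ 6 m A = ∑ σ : BOmega 6 m, bwt θ σ * ind (A σ) := by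
  rw [bPr]
  refine Finset.sum_congr rfl fun σ _ => ?_
  by_cases h : A σ
  · rw [if_pos h, ind_pos h, mul_one]
  · rw [if_neg h, ind_neg h, mul_zero]

lemma ind_prod {m : ℕ} (p : Fin (6^m) → Prop) :
    ∏ t : Fin (6^m), ind (p t) = ind (∀ t, p t) := by
  by_cases h : ∀ t, p t
  · rw [ind_pos h, Finset.prod_congr rfl fun t _ => ind_pos (h t), Finset.prod_const_one]
  · push_neg at h
    obtain ⟨t0, ht0⟩ := h
    rw [ind_neg (fun hc => ht0 (hc t0))]
    exact Finset.prod_eq_zero (Finset.mem_univ t0) (ind_neg ht0)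

noncomputable def RR (θ : ℝ) {e : ℕ} (x : Fin (6^(e+1)) → Bool) (t : Fin (6^1)) (b : Bool) : ℝ :=
  bPr θ 6 e (fun σ => σ.1 = b ∧ ∀ u, leafLabel σ u = x (emb t u))

lemma RR_nonneg {e : ℕ} (x : Fin (6^(e+1)) → Bool) (t : Fin (6^1)) (b : Bool) :
    0 ≤ RR (9/10) x t b := bPr_nonneg e _

lemma w_pair (θ : ℝ) (r : Bool) : w θ (xor r true) + w θ (xor r false) = 1 := by
  cases r <;> simp [w] <;> ring

lemma split_ind (θ : ℝ) {m : ℕ} (r : Bool) (P : BOmega 6 m → Prop) :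
    ∑ σ : BOmega 6 m, 2 * w θ (xor r σ.1) * bwt θ σ * ind (P σ)
      = 2 * w θ (xor r true) * bPr θ 6 m (fun σ => σ.1 = true ∧ P σ)
        + 2 * w θ (xor r false) * bPr θ 6 m (fun σ => σ.1 = false ∧ P σ) := by
  rw [bPr_eq_sum_ind, bPr_eq_sum_ind, Finset.mul_sum, Finset.mul_sum, ← Finset.sum_add_distrib]
  refine Finset.sum_congr rfl fun σ _ => ?_
  by_cases h1 : P σ
  · cases hσ : σ.1
    · rw [ind_pos h1, ind_neg (fun hc => Bool.false_ne_true hc.1), ind_pos ⟨rfl, h1⟩]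
      ring
    · rw [ind_pos h1, ind_pos ⟨rfl, h1⟩, ind_neg (fun hc => by simp at hc)]
      ring
  · rw [ind_neg h1, ind_neg (fun hc => h1 hc.2), ind_neg (fun hc => h1 hc.2)]
    ring

lemma split_c (θ : ℝ) {e : ℕ} (x : Fin (6^(e+1)) → Bool) (r : Bool) (t : Fin (6^1))
    (c : Bool → Prop) :
    ∑ σ : BOmega 6 e, 2 * w θ (xor r σ.1) * bwt θ σ *
        ind (c σ.1 ∧ ∀ u, leafLabel σ u = x (emb t u))
      = 2 * w θ (xor r true) * (ind (c true) * RR θ x t true)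
        + 2 * w θ (xor r false) * (ind (c false) * RR θ x t false) := by
  refine (split_ind θ r (fun σ => c σ.1 ∧ ∀ u, leafLabel σ u = x (emb t u))).trans ?_
  have key : ∀ b : Bool,
      bPr θ 6 e (fun σ => σ.1 = b ∧ c σ.1 ∧ ∀ u, leafLabel σ u = x (emb t u))
        = ind (c b) * RR θ x t b := by
    intro b
    by_cases hc : c b
    · rw [ind_pos hc, one_mul, RR]
      refine bPr_congr _ _ _ _ fun σ => ?_
      constructor
      · rintro ⟨h1, _, h3⟩; exact ⟨h1, h3⟩
      · rintro ⟨h1, h3⟩; exact ⟨h1, by rw [h1]; exact hc, h3⟩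
    · rw [ind_neg hc, zero_mul]
      exact bPr_false _ _ _ fun σ => by rintro ⟨h1, h2, _⟩; rw [h1] at h2; exact hc h2
  rw [key true, key false]

lemma sum_two_w_one (θ : ℝ) {e : ℕ} (r : Bool) :
    ∑ σ : BOmega 6 e, 2 * w θ (xor r σ.1) * bwt θ σ = 1 := by
  have h1 : ∀ σ : BOmega 6 e, 2 * w θ (xor r σ.1) * bwt θ σ
      = 2 * w θ (xor r σ.1) * bwt θ σ * ind ((fun _ : BOmega 6 e => True) σ) := by
    intro σ; rw [ind_pos trivial, mul_one]
  rw [Finset.sum_congr rfl fun σ _ => h1 σ]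
  refine (split_ind θ r (fun _ => True)).trans ?_
  have h2 : ∀ b : Bool, bPr θ 6 e (fun σ => σ.1 = b ∧ (fun _ : BOmega 6 e => True) σ) = 1/2 :=
    fun b => (bPr_congr θ e _ (fun σ => σ.1 = b) (fun σ => by simp)).trans (mass θ e b)
  refine Eq.trans (congrArg₂ (fun A B => 2 * w θ (xor r true) * A + 2 * w θ (xor r false) * B)
    (h2 true) (h2 false)) ?_
  linear_combination w_pair θ r

lemma global_eq (θ : ℝ) {e : ℕ} (x : Fin (6^(e+1)) → Bool) (c : Bool → Prop) :
    bPr θ 6 (e+1) (fun ω => c ω.1 ∧ ∀ v, leafLabel ω v = x v)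
      = (1/2) * ∑ r : Bool, ind (c r) *
          ∏ t : Fin (6^1),
            (2 * w θ (xor r true) * RR θ x t true + 2 * w θ (xor r false) * RR θ x t false) := by
  rw [bPr_eq_sum_ind]
  have point : ∀ ω : BOmega 6 (e+1),
      bwt θ ω * ind (c ω.1 ∧ ∀ v, leafLabel ω v = x v)
        = bwt θ ω * ind (c ω.1) *
            ∏ t : Fin (6^1), ind (∀ u, leafLabel (toSub ω t) u = x (emb t u)) := by
    intro ω
    rw [ind_prod]
    by_cases h1 : c ω.1
    · by_cases h2 : ∀ v, leafLabel ω v = x v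
      · rw [ind_pos ⟨h1, h2⟩, ind_pos h1, ind_pos ((cond_all ω x).mp h2)]; ring
      · rw [ind_neg (fun hc => h2 hc.2), ind_pos h1,
          ind_neg (fun hc => h2 ((cond_all ω x).mpr hc))]; ring
    · rw [ind_neg (fun hc => h1 hc.1), ind_neg h1]; ring
  rw [Finset.sum_congr rfl fun ω _ => point ω]
  refine (factor θ e (fun r => ind (c r))
    (fun _ t σ => ind (∀ u, leafLabel σ u = x (emb t u)))).trans ?_
  beta_reduce
  congr 1
  refine Finset.sum_congr rfl fun r _ => ?_
  congr 1
  refine Finset.prod_congr rfl fun t _ => ?_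
  have h3 : ∀ σ : BOmega 6 e,
      2 * w θ (xor r σ.1) * bwt θ σ * ind (∀ u, leafLabel σ u = x (emb t u))
      = 2 * w θ (xor r σ.1) * bwt θ σ *
          ind ((fun _ : Bool => True) σ.1 ∧ ∀ u, leafLabel σ u = x (emb t u)) := by
    intro σ
    by_cases h : ∀ u, leafLabel σ u = x (emb t u)
    · rw [ind_pos h, ind_pos ⟨trivial, h⟩]
    · rw [ind_neg h, ind_neg (fun hc => h hc.2)]
  rw [Finset.sum_congr rfl fun σ _ => h3 σ]
  refine (split_c θ x r t (fun _ => True)).trans ?_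
  beta_reduce
  rw [ind_pos trivial]
  ring

lemma local_eq (θ : ℝ) {e : ℕ} (x : Fin (6^(e+1)) → Bool) (i : Fin (6^1)) (c : Bool → Prop) :
    bPr θ 6 (e+1) (fun ω => c (toSub ω i).1 ∧
        ∀ v : Fin (6^(e+1)), (v:ℕ) / 6^e = (i:ℕ) → leafLabel ω v = x v)
      = (1/2) * ∑ r : Bool,
          (2 * w θ (xor r true) * (ind (c true) * RR θ x i true)
            + 2 * w θ (xor r false) * (ind (c false) * RR θ x i false)) := by
  rw [bPr_eq_sum_ind]
  have point : ∀ ω : BOmega 6 (e+1),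
      bwt θ ω * ind (c (toSub ω i).1 ∧
          ∀ v : Fin (6^(e+1)), (v:ℕ) / 6^e = (i:ℕ) → leafLabel ω v = x v)
        = bwt θ ω * (1:ℝ) * ∏ t : Fin (6^1),
            (if t = i then ind (c (toSub ω t).1 ∧ ∀ u, leafLabel (toSub ω t) u = x (emb t u))
              else 1) := by
    intro ω
    rw [Finset.prod_ite_eq' univ i
      (fun t => ind (c (toSub ω t).1 ∧ ∀ u, leafLabel (toSub ω t) u = x (emb t u))),
      if_pos (Finset.mem_univ i), mul_one]
    by_cases hc : c (toSub ω i).1 ∧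
        ∀ v : Fin (6^(e+1)), (v:ℕ) / 6^e = (i:ℕ) → leafLabel ω v = x v
    · rw [ind_pos hc, ind_pos ⟨hc.1, (cond_sub ω x i).mp hc.2⟩]
    · rw [ind_neg hc, ind_neg (fun hx => hc ⟨hx.1, (cond_sub ω x i).mpr hx.2⟩)]
  rw [Finset.sum_congr rfl fun ω _ => point ω]
  refine (factor θ e (fun _ => (1:ℝ))
    (fun _ t σ => if t = i then ind (c σ.1 ∧ ∀ u, leafLabel σ u = x (emb t u)) else 1)).trans ?_
  beta_reduce
  congr 1
  refine Finset.sum_congr rfl fun r _ => ?_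
  rw [one_mul]
  have hS : ∀ t : Fin (6^1), (∑ σ : BOmega 6 e, 2 * w θ (xor r σ.1) * bwt θ σ *
      (if t = i then ind (c σ.1 ∧ ∀ u, leafLabel σ u = x (emb t u)) else 1))
      = if t = i then (2 * w θ (xor r true) * (ind (c true) * RR θ x i true)
        + 2 * w θ (xor r false) * (ind (c false) * RR θ x i false)) else 1 := by
    intro t
    by_cases ht : t = i
    · subst ht
      rw [if_pos rfl]
      have h4 : ∀ σ : BOmega 6 e, 2 * w θ (xor r σ.1) * bwt θ σ *
          (if t = t then ind (c σ.1 ∧ ∀ u, leafLabel σ u = x (emb t u)) else 1)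
          = 2 * w θ (xor r σ.1) * bwt θ σ *
            ind (c σ.1 ∧ ∀ u, leafLabel σ u = x (emb t u)) := by
        intro σ; rw [if_pos rfl]
      rw [Finset.sum_congr rfl fun σ _ => h4 σ]
      exact split_c θ x r t c
    · rw [if_neg ht]
      have h4 : ∀ σ : BOmega 6 e, 2 * w θ (xor r σ.1) * bwt θ σ *
          (if t = i then ind (c σ.1 ∧ ∀ u, leafLabel σ u = x (emb t u)) else 1)
          = 2 * w θ (xor r σ.1) * bwt θ σ := by
        intro σ; rw [if_neg ht, mul_one]
      rw [Finset.sum_congr rfl fun σ _ => h4 σ]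
      exact sum_two_w_one θ r
  rw [Finset.prod_congr rfl fun t _ => hS t]
  rw [Finset.prod_ite_eq' univ i
    (fun _ => 2 * w θ (xor r true) * (ind (c true) * RR θ x i true)
      + 2 * w θ (xor r false) * (ind (c false) * RR θ x i false)),
    if_pos (Finset.mem_univ i)]

end BT

open BT in
/-- In the Ising broadcast tree model with `θ = 9/10` and
`k = 6`, suppose `x` is an assignment to the leaves of a depth-`d` tree such
that for at least `4` of the `6` depth-1 subtrees `i`, the posterior
`P[X^(1)_i = 1 | leaves of subtree i agree with x] ≥ 0.95`.  Then
`P[X^(0) = 1 | X^(d) = x] ≥ 19/20`. -/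
theorem gadget_posterior_bound (d : ℕ) (hd : 0 < d) (x : Fin (6 ^ d) → Bool)
    (h4 : 4 ≤ {i : Fin (6 ^ 1) |
        (0.95 : ℝ) ≤
          bPr (9 / 10) 6 d (fun ω =>
              xor ω.1 (ω.2 ⟨0, hd⟩ i) = true ∧
                ∀ v : Fin (6 ^ d), (v : ℕ) / 6 ^ (d - 1) = (i : ℕ) → leafLabel ω v = x v) /
          bPr (9 / 10) 6 d (fun ω =>
              ∀ v : Fin (6 ^ d), (v : ℕ) / 6 ^ (d - 1) = (i : ℕ) → leafLabel ω v = x v)}.ncard) :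
    (19 : ℝ) / 20 ≤
      bPr (9 / 10) 6 d (fun ω => ω.1 = true ∧ ∀ v, leafLabel ω v = x v) /
        bPr (9 / 10) 6 d (fun ω => ∀ v, leafLabel ω v = x v) := by
  classical
  obtain ⟨e, rfl⟩ : ∃ e, d = e + 1 := ⟨d - 1, (Nat.succ_pred_eq_of_pos hd).symm⟩
  -- numerator
  have hNum : bPr (9 / 10) 6 (e + 1) (fun ω => ω.1 = true ∧ ∀ v, leafLabel ω v = x v)
      = (1/2) * ∏ t : Fin (6^1),
          ((19/10) * RR (9/10) x t true + (1/10) * RR (9/10) x t false) := by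
    refine Eq.trans (bPr_congr _ _ _
        (fun ω => (fun b => b = true) ω.1 ∧ ∀ v, leafLabel ω v = x v) (fun ω => Iff.rfl)) ?_
    refine (global_eq (9/10) x (fun b => b = true)).trans ?_
    rw [Fintype.sum_bool]
    beta_reduce
    rw [ind_pos rfl, ind_neg Bool.false_ne_true, one_mul, zero_mul, add_zero]
    congr 1
    refine Finset.prod_congr rfl fun t _ => ?_
    simp [w]
    ring
  -- denominator
  have hDen : bPr (9 / 10) 6 (e + 1) (fun ω => ∀ v, leafLabel ω v = x v)
      = (1/2) * ((∏ t : Fin (6^1),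
            ((19/10) * RR (9/10) x t true + (1/10) * RR (9/10) x t false))
          + ∏ t : Fin (6^1),
            ((1/10) * RR (9/10) x t true + (19/10) * RR (9/10) x t false)) := by
    refine Eq.trans (bPr_congr _ _ _
        (fun ω => (fun _ : Bool => True) ω.1 ∧ ∀ v, leafLabel ω v = x v)
        (fun ω => ⟨fun h => ⟨trivial, h⟩, fun h => h.2⟩)) ?_
    refine (global_eq (9/10) x (fun _ => True)).trans ?_
    rw [Fintype.sum_bool]
    beta_reduce
    rw [ind_pos trivial, one_mul, one_mul]
    congr 1
    congr 1
    · refine Finset.prod_congr rfl fun t _ => ?_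
      simp [w]; ring
    · refine Finset.prod_congr rfl fun t _ => ?_
      simp [w]; ring
  -- the per-subtree numerators / denominators
  have hNi : ∀ i : Fin (6^1), bPr (9 / 10) 6 (e + 1) (fun ω =>
        xor ω.1 (ω.2 ⟨0, hd⟩ i) = true ∧
          ∀ v : Fin (6 ^ (e + 1)), (v : ℕ) / 6 ^ (e + 1 - 1) = (i : ℕ) → leafLabel ω v = x v)
      = RR (9/10) x i true := by
    intro i
    refine Eq.trans (bPr_congr _ _ _
        (fun ω => (fun b => b = true) (toSub ω i).1 ∧
          ∀ v : Fin (6 ^ (e + 1)), (v : ℕ) / 6 ^ e = (i : ℕ) → leafLabel ω v = x v)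
        (fun ω => Iff.rfl)) ?_
    refine (local_eq (9/10) x i (fun b => b = true)).trans ?_
    rw [Fintype.sum_bool]
    beta_reduce
    rw [ind_pos rfl, ind_neg Bool.false_ne_true, one_mul]
    simp [w]
    ring
  have hDi : ∀ i : Fin (6^1), bPr (9 / 10) 6 (e + 1) (fun ω =>
        ∀ v : Fin (6 ^ (e + 1)), (v : ℕ) / 6 ^ (e + 1 - 1) = (i : ℕ) → leafLabel ω v = x v)
      = RR (9/10) x i true + RR (9/10) x i false := by
    intro i
    refine Eq.trans (bPr_congr _ _ _
        (fun ω => (fun _ : Bool => True) (toSub ω i).1 ∧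
          ∀ v : Fin (6 ^ (e + 1)), (v : ℕ) / 6 ^ e = (i : ℕ) → leafLabel ω v = x v)
        (fun ω => ⟨fun h => ⟨trivial, h⟩, fun h => h.2⟩)) ?_
    refine (local_eq (9/10) x i (fun _ => True)).trans ?_
    rw [Fintype.sum_bool]
    beta_reduce
    rw [ind_pos trivial, one_mul, one_mul]
    simp [w]
    ring
  -- positivity of the denominators
  have hDpos : ∀ i : Fin (6^1), 0 < RR (9/10) x i true + RR (9/10) x i false := by
    intro i
    rw [← hDi i]
    apply bPr_pos
    obtain ⟨σ0, h0⟩ := exists_config (e+1) x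
    exact ⟨σ0, fun v _ => h0 v⟩
  -- per-subtree bound on good subtrees
  have hkey : ∀ i : Fin (6^1),
      (0.95 : ℝ) ≤
          bPr (9 / 10) 6 (e + 1) (fun ω =>
              xor ω.1 (ω.2 ⟨0, hd⟩ i) = true ∧
                ∀ v : Fin (6 ^ (e + 1)), (v : ℕ) / 6 ^ (e + 1 - 1) = (i : ℕ) → leafLabel ω v = x v) /
          bPr (9 / 10) 6 (e + 1) (fun ω =>
              ∀ v : Fin (6 ^ (e + 1)), (v : ℕ) / 6 ^ (e + 1 - 1) = (i : ℕ) → leafLabel ω v = x v)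
      → RR (9/10) x i false ≤ (1/19) * RR (9/10) x i true := by
    intro i hi
    rw [hNi i, hDi i] at hi
    have hD := hDpos i
    have h1 : (0.95:ℝ) * (RR (9/10) x i true + RR (9/10) x i false) ≤ RR (9/10) x i true :=
      (le_div_iff₀ hD).mp hi
    have h2 := RR_nonneg x i false
    linarith
  -- extract a 4-element good set
  set G := {i : Fin (6 ^ 1) |
        (0.95 : ℝ) ≤
          bPr (9 / 10) 6 (e+1) (fun ω =>
              xor ω.1 (ω.2 ⟨0, hd⟩ i) = true ∧
                ∀ v : Fin (6 ^ (e+1)), (v : ℕ) / 6 ^ (e + 1 - 1) = (i : ℕ) → leafLabel ω v = x v) /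
          bPr (9 / 10) 6 (e+1) (fun ω =>
              ∀ v : Fin (6 ^ (e+1)), (v : ℕ) / 6 ^ (e + 1 - 1) = (i : ℕ) → leafLabel ω v = x v)}
    with hG
  have hfin : G.Finite := Set.toFinite _
  have hcard : 4 ≤ hfin.toFinset.card := by
    rw [← Set.ncard_eq_toFinset_card G hfin]
    exact h4
  obtain ⟨S', hS'sub, hS'card⟩ := Finset.exists_subset_card_eq hcard
  -- pointwise bounds
  have hApos : ∀ t : Fin (6^1),
      0 < (19/10) * RR (9/10) x t true + (1/10) * RR (9/10) x t false := by
    intro t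
    have h1 := hDpos t
    have h2 := RR_nonneg x t true
    have h3 := RR_nonneg x t false
    linarith
  have hBnn : ∀ t : Fin (6^1),
      0 ≤ (1/10) * RR (9/10) x t true + (19/10) * RR (9/10) x t false := by
    intro t
    have h2 := RR_nonneg x t true
    have h3 := RR_nonneg x t false
    linarith
  have hBle : ∀ t : Fin (6^1),
      (1/10) * RR (9/10) x t true + (19/10) * RR (9/10) x t false
        ≤ (if t ∈ S' then (2/19 : ℝ) else 19) *
          ((19/10) * RR (9/10) x t true + (1/10) * RR (9/10) x t false) := by
    intro t
    have h2 := RR_nonneg x t true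
    have h3 := RR_nonneg x t false
    by_cases ht : t ∈ S'
    · rw [if_pos ht]
      have hg : t ∈ G := (Set.Finite.mem_toFinset hfin).mp (hS'sub ht)
      have := hkey t hg
      linarith
    · rw [if_neg ht]
      linarith
  have hprodc : ∏ t : Fin (6^1), (if t ∈ S' then (2/19 : ℝ) else 19) = 16/361 := by
    rw [← Finset.prod_mul_prod_compl S']
    rw [Finset.prod_congr rfl (fun t ht => if_pos ht),
      Finset.prod_congr rfl (fun t ht => if_neg (Finset.mem_compl.mp ht)),
      Finset.prod_const, Finset.prod_const, hS'card, Finset.card_compl, hS'card]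
    norm_num
  have hprod : ∏ t : Fin (6^1), ((1/10) * RR (9/10) x t true + (19/10) * RR (9/10) x t false)
      ≤ (16/361) * ∏ t : Fin (6^1),
          ((19/10) * RR (9/10) x t true + (1/10) * RR (9/10) x t false) := by
    calc ∏ t : Fin (6^1), ((1/10) * RR (9/10) x t true + (19/10) * RR (9/10) x t false)
        ≤ ∏ t : Fin (6^1), ((if t ∈ S' then (2/19 : ℝ) else 19) *
            ((19/10) * RR (9/10) x t true + (1/10) * RR (9/10) x t false)) :=
          Finset.prod_le_prod (fun t _ => hBnn t) (fun t _ => hBle t)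
      _ = (∏ t : Fin (6^1), (if t ∈ S' then (2/19 : ℝ) else 19)) *
            ∏ t : Fin (6^1), ((19/10) * RR (9/10) x t true + (1/10) * RR (9/10) x t false) :=
          Finset.prod_mul_distrib
      _ = (16/361) * ∏ t : Fin (6^1),
            ((19/10) * RR (9/10) x t true + (1/10) * RR (9/10) x t false) := by rw [hprodc]
  -- conclude
  rw [hNum, hDen]
  have hPA : 0 < ∏ t : Fin (6^1),
      ((19/10) * RR (9/10) x t true + (1/10) * RR (9/10) x t false) :=
    Finset.prod_pos (fun t _ => hApos t)
  have hPB : 0 ≤ ∏ t : Fin (6^1),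
      ((1/10) * RR (9/10) x t true + (19/10) * RR (9/10) x t false) :=
    Finset.prod_nonneg (fun t _ => hBnn t)
  have hden : 0 < (1/2) * ((∏ t : Fin (6^1),
      ((19/10) * RR (9/10) x t true + (1/10) * RR (9/10) x t false))
      + ∏ t : Fin (6^1), ((1/10) * RR (9/10) x t true + (19/10) * RR (9/10) x t false)) := by
    linarith
  rw [le_div_iff₀ hden]
  linarith
end

section
/- Let p₁,…,p₆ ∈ [0,1] with at least 4 of the p_i satisfying p_i ≥ 0.95. Then the ratio Π_{i=1}^6 ((19/20)p_i + (1/20)(1-p_i)) / [Π_{i=1}^6 ((19/20)p_i + (1/20)(1-p_i)) + Π_{i=1}^6 ((1/20)p_i + (19/20)(1-p_i))] is at least 19/20. -/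
open Finset

/-- Let `p₁, …, p₆ ∈ [0,1]` with at least `4` of the `p i`
satisfying `p i ≥ 0.95`. Then
`Π ((19/20)pᵢ + (1/20)(1-pᵢ)) / (Π ((19/20)pᵢ + (1/20)(1-pᵢ)) + Π ((1/20)pᵢ + (19/20)(1-pᵢ)))`
is at least `19/20`. -/
theorem gadget_arithmetic (p : Fin 6 → ℝ)
    (hp0 : ∀ i, 0 ≤ p i) (hp1 : ∀ i, p i ≤ 1)
    (h4 : 4 ≤ {i : Fin 6 | (0.95 : ℝ) ≤ p i}.ncard) :
    (19 : ℝ) / 20 ≤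
      (∏ i : Fin 6, ((19 / 20) * p i + (1 / 20) * (1 - p i))) /
        ((∏ i : Fin 6, ((19 / 20) * p i + (1 / 20) * (1 - p i))) +
          (∏ i : Fin 6, ((1 / 20) * p i + (19 / 20) * (1 - p i)))) := by
  classical
  set f : Fin 6 → ℝ := fun i => (19 / 20) * p i + (1 / 20) * (1 - p i) with hf
  set g : Fin 6 → ℝ := fun i => (1 / 20) * p i + (19 / 20) * (1 - p i) with hg
  set T : Finset (Fin 6) := univ.filter (fun i => (0.95 : ℝ) ≤ p i) with hT
  have hcard : 4 ≤ T.card := by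
    have hnc : {i : Fin 6 | (0.95 : ℝ) ≤ p i}.ncard = T.card := by
      rw [hT]
      simp [Set.ncard_eq_toFinset_card', Set.toFinset_setOf]
    omega
  have hfpos : ∀ i, 0 < f i := fun i => by
    simp only [hf]; nlinarith [hp0 i, hp1 i]
  have hgpos : ∀ i, 0 < g i := fun i => by
    simp only [hg]; nlinarith [hp0 i, hp1 i]
  have hApos : 0 < ∏ i : Fin 6, f i := Finset.prod_pos (fun i _ => hfpos i)
  have hBpos : 0 < ∏ i : Fin 6, g i := Finset.prod_pos (fun i _ => hgpos i)
  have key : 19 * ∏ i : Fin 6, g i ≤ ∏ i : Fin 6, f i := by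
    have hsplitA : ∏ i : Fin 6, f i = (∏ i ∈ T, f i) * ∏ i ∈ Tᶜ, f i :=
      (Finset.prod_mul_prod_compl T f).symm
    have hsplitB : ∏ i : Fin 6, g i = (∏ i ∈ T, g i) * ∏ i ∈ Tᶜ, g i :=
      (Finset.prod_mul_prod_compl T g).symm
    have h1 : ∏ i ∈ T, g i ≤ (19 / 181) ^ T.card * ∏ i ∈ T, f i := by
      calc ∏ i ∈ T, g i ≤ ∏ i ∈ T, (19 / 181 * f i) := by
            apply Finset.prod_le_prod (fun i _ => (hgpos i).le)
            intro i hi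
            have hpi : (0.95 : ℝ) ≤ p i := by
              rw [hT] at hi; exact (Finset.mem_filter.mp hi).2
            simp only [hf, hg]
            nlinarith [hp1 i]
        _ = (19 / 181) ^ T.card * ∏ i ∈ T, f i := by
            rw [Finset.prod_mul_distrib, Finset.prod_const]
    have h2 : ∏ i ∈ Tᶜ, g i ≤ 19 ^ Tᶜ.card * ∏ i ∈ Tᶜ, f i := by
      calc ∏ i ∈ Tᶜ, g i ≤ ∏ i ∈ Tᶜ, (19 * f i) := by
            apply Finset.prod_le_prod (fun i _ => (hgpos i).le)
            intro i _
            simp only [hf, hg]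
            nlinarith [hp0 i, hp1 i]
        _ = 19 ^ Tᶜ.card * ∏ i ∈ Tᶜ, f i := by
            rw [Finset.prod_mul_distrib, Finset.prod_const]
    have hTApos : 0 < ∏ i ∈ T, f i := Finset.prod_pos (fun i _ => hfpos i)
    have hTcApos : 0 < ∏ i ∈ Tᶜ, f i := Finset.prod_pos (fun i _ => hfpos i)
    have hTBpos : 0 ≤ ∏ i ∈ T, g i := le_of_lt (Finset.prod_pos (fun i _ => hgpos i))
    have hcardc : Tᶜ.card = 6 - T.card := by
      rw [Finset.card_compl]; rfl
    have hcardle : T.card ≤ 6 := by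
      have := Finset.card_le_univ T
      simpa using this
    have hcoeff : 19 * ((19 / 181 : ℝ) ^ T.card * 19 ^ Tᶜ.card) ≤ 1 := by
      rw [hcardc]
      interval_cases h : T.card <;> norm_num
    calc 19 * ∏ i : Fin 6, g i
        = 19 * ((∏ i ∈ T, g i) * ∏ i ∈ Tᶜ, g i) := by rw [hsplitB]
      _ ≤ 19 * (((19 / 181) ^ T.card * ∏ i ∈ T, f i) * (19 ^ Tᶜ.card * ∏ i ∈ Tᶜ, f i)) := by
          apply mul_le_mul_of_nonneg_left _ (by norm_num)
          apply mul_le_mul h1 h2 (le_of_lt (Finset.prod_pos (fun i _ => hgpos i)))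
          positivity
      _ = (19 * ((19 / 181) ^ T.card * 19 ^ Tᶜ.card)) * ((∏ i ∈ T, f i) * ∏ i ∈ Tᶜ, f i) := by
          ring
      _ ≤ 1 * ((∏ i ∈ T, f i) * ∏ i ∈ Tᶜ, f i) := by
          apply mul_le_mul_of_nonneg_right hcoeff (by positivity)
      _ = ∏ i : Fin 6, f i := by rw [one_mul, ← hsplitA]
  rw [le_div_iff₀ (by linarith)]
  linarith
end
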